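/- arXiv:1911.12403 — 3 statements merged into one kernel-verified Lean document; each statement's English description precedes it below -/
import Mathlib

section
/- For every positive integer ℓ, there exists a 21ℓ × 21 Roman-2 design. -/
/-- A uniform `n × t` crossover design: each row is a bijection `Fin t → Fin t`,
`t` divides `n`, and each treatment appears exactly `n / t` times in each column. -/
def IsUniformDesign (n t : ℕ) (D : Fin n → Fin t → Fin t) : Prop :=
  t ∣ n ∧ (∀ i : Fin n, Function.Bijective (D i)) ∧
  ∀ (j x : Fin t), Nat.card {i : Fin n // D i j = x} = n / t

/-- `o_d(x, y)`: the number of pairs `(i, j)` with `j + d < t`, `D i j = x` and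
`D i (j + d) = y`. -/
noncomputable def designPairCount (n t : ℕ) (D : Fin n → Fin t → Fin t) (d : ℕ) (x y : Fin t) : ℕ :=
  Nat.card {p : Fin n × Fin t //
    ∃ h : (p.2 : ℕ) + d < t, D p.1 p.2 = x ∧ D p.1 ⟨(p.2 : ℕ) + d, h⟩ = y}

/-- A Roman-`k` design: a uniform design with `o_d(x, y) ≤ n / t` for all
`1 ≤ d ≤ k` and all distinct treatments `x ≠ y`. -/
def IsRomanDesign (n t k : ℕ) (D : Fin n → Fin t → Fin t) : Prop :=
  IsUniformDesign n t D ∧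
  ∀ d : ℕ, 1 ≤ d → d ≤ k → ∀ x y : Fin t, x ≠ y → designPairCount n t D d x y ≤ n / t

/-- A Vatican design is a Roman-`(t - 1)` design. -/
def IsVaticanDesign (n t : ℕ) (D : Fin n → Fin t → Fin t) : Prop :=
  IsRomanDesign n t (t - 1) D

/-!
If `s` lists the elements of a group `G` of order `t` so that, for each distance `d ≤ k`, the
quotients `(s j)⁻¹ * s (j + d)` are pairwise distinct, then the `t` left translates `g * s` form a
Roman-`k` design: an ordered pair `(x, y)` at distance `d` in row `g` forces
`x⁻¹ * y = (s j)⁻¹ * s (j + d)`, which pins down `j`, and then `g * s j = x` pins down `g`. The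
nonabelian group `ZMod 7 ⋊ ZMod 3` of order 21 has such an ordering for `k = 2`, and stacking `ℓ`
copies of a Roman design multiplies all counts by `ℓ`.
-/

theorem Nat.card_subtype_snd_of_equiv {α β γ : Type*} (e : α ≃ γ × β) (P : β → Prop) :
    Nat.card {a // P (e a).2} = Nat.card γ * Nat.card {b // P b} := by
  rw [mul_comm, ← Nat.card_prod]
  exact Nat.card_congr <| ((e.trans (Equiv.prodComm γ β)).subtypeEquiv fun _ => Iff.rfl).trans
    Equiv.prodSubtypeFstEquivSubtypeProd

theorem Nat.card_fiber_equiv {α β : Type*} (f : α ≃ β) (b : β) :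
    Nat.card {a // f a = b} = 1 := by
  rw [Nat.card_congr (f.subtypeEquiv (q := (· = b)) fun _ => Iff.rfl)]
  exact Nat.card_unique

/-- Row `i` of the stack is row `i % n` of `D`. -/
def stackDesign {n t : ℕ} (ℓ : ℕ) (D : Fin n → Fin t → Fin t) : Fin (ℓ * n) → Fin t → Fin t :=
  fun i => D (finProdFinEquiv.symm i).2

theorem IsRomanDesign.stack {n t k : ℕ} {D : Fin n → Fin t → Fin t} (hD : IsRomanDesign n t k D)
    (ℓ : ℕ) : IsRomanDesign (ℓ * n) t k (stackDesign ℓ D) := by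
  obtain ⟨⟨htn, hrows, hcols⟩, hpairs⟩ := hD
  rw [IsRomanDesign, IsUniformDesign, Nat.mul_div_assoc ℓ htn]
  refine ⟨⟨htn.mul_left ℓ, fun i => hrows _, fun j x => ?_⟩, fun d hd1 hdk x y hxy => ?_⟩
  · exact (Nat.card_subtype_snd_of_equiv finProdFinEquiv.symm (D · j = x)).trans
      (by rw [Nat.card_fin, hcols])
  · let e : Fin (ℓ * n) × Fin t ≃ Fin ℓ × (Fin n × Fin t) :=
      (finProdFinEquiv.symm.prodCongr (Equiv.refl _)).trans (Equiv.prodAssoc _ _ _)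
    exact (Nat.card_subtype_snd_of_equiv e (fun p : Fin n × Fin t =>
        ∃ h : (p.2 : ℕ) + d < t, D p.1 p.2 = x ∧ D p.1 ⟨p.2 + d, h⟩ = y)).trans_le
      (by rw [Nat.card_fin]; exact Nat.mul_le_mul_left ℓ (hpairs d hd1 hdk x y hxy))

section GroupDesign

variable {G : Type*} [Group G] {t : ℕ}

def distanceQuotient (s : Fin t → G) (d : ℕ) (j : {j : Fin t // j + d < t}) : G :=
  (s j)⁻¹ * s ⟨j + d, j.2⟩

theorem distanceQuotient_eq_of_mul {d : ℕ} {s : Fin t → G} {j : {j : Fin t // j + d < t}}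
    {g a b : G} (ha : g * s j = a) (hb : g * s ⟨j + d, j.2⟩ = b) :
    distanceQuotient s d j = a⁻¹ * b := by
  simp [← ha, ← hb, distanceQuotient, mul_assoc]

def groupDesign (e : G ≃ Fin t) (s : Fin t → G) : Fin t → Fin t → Fin t :=
  fun i j => e (e.symm i * s j)

theorem isRomanDesign_groupDesign {k : ℕ} (e : G ≃ Fin t) {s : Fin t → G}
    (hs : Function.Injective s)
    (hq : ∀ d, 1 ≤ d → d ≤ k → Function.Injective (distanceQuotient s d)) :
    IsRomanDesign t t k (groupDesign e s) := by
  refine ⟨⟨dvd_rfl, fun i => ?_, fun j x => ?_⟩, fun d hd1 hdk x y _ => ?_⟩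
  · exact Finite.injective_iff_bijective.mp (e.injective.comp ((mul_right_injective _).comp hs))
  · rw [Nat.div_self j.pos]
    exact Nat.card_fiber_equiv (e.symm.trans ((Equiv.mulRight (s j)).trans e)) x
  · rw [Nat.div_self x.pos, designPairCount, Finite.card_le_one_iff_subsingleton]
    constructor
    rintro ⟨⟨r, j⟩, hj, hx, hy⟩ ⟨⟨r', j'⟩, hj', hx', hy'⟩
    simp only [groupDesign, ← e.eq_symm_apply] at hx hy hx' hy'
    obtain rfl : j = j' := congrArg Subtype.val <| hq d hd1 hdk (a₁ := ⟨j, hj⟩) (a₂ := ⟨j', hj'⟩)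
      ((distanceQuotient_eq_of_mul hx hy).trans (distanceQuotient_eq_of_mul hx' hy').symm)
    obtain rfl : r = r' := e.symm.injective (mul_right_cancel (hx.trans hx'.symm))
    rfl

end GroupDesign

def mulTwoAut : MulAut (Multiplicative (ZMod 7)) where
  toFun x := .ofAdd (2 * x.toAdd)
  invFun x := .ofAdd (4 * x.toAdd)
  left_inv x := by revert x; decide
  right_inv x := by revert x; decide
  map_mul' x y := mul_add 2 x.toAdd y.toAdd

theorem mulTwoAut_pow_three : mulTwoAut ^ 3 = 1 := by
  ext x; revert x; decide

def frobeniusAction : Multiplicative (ZMod 3) →* MulAut (Multiplicative (ZMod 7)) where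
  toFun a := mulTwoAut ^ a.toAdd.val
  map_one' := rfl
  map_mul' a b := by
    rw [← pow_add, toAdd_mul, ZMod.val_add, ← pow_eq_pow_mod _ mulTwoAut_pow_three]

abbrev FrobeniusGroup21 := Multiplicative (ZMod 7) ⋊[frobeniusAction] Multiplicative (ZMod 3)

namespace FrobeniusGroup21

instance : Finite FrobeniusGroup21 := .of_equiv _ SemidirectProduct.equivProd.symm

theorem card : Nat.card FrobeniusGroup21 = 21 := by simp

def of (b : ZMod 7) (a : ZMod 3) : FrobeniusGroup21 := ⟨.ofAdd b, .ofAdd a⟩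

def roman2Seq : Fin 21 → FrobeniusGroup21 :=
  ![of 6 1, of 6 0, of 5 0, of 0 0, of 2 1, of 1 1, of 2 0, of 5 2, of 1 0, of 3 2, of 3 0,
    of 2 2, of 4 2, of 3 1, of 6 2, of 4 0, of 5 1, of 0 1, of 1 2, of 0 2, of 4 1]

theorem roman2Seq_injective : Function.Injective roman2Seq := by decide

theorem roman2Seq_distanceQuotient_injective (d : ℕ) (hd1 : 1 ≤ d) (hd2 : d ≤ 2) :
    Function.Injective (distanceQuotient roman2Seq d) := by
  interval_cases d <;> decide

end FrobeniusGroup21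

theorem roman2_design_21_general (ℓ : ℕ) :
    ∃ D : Fin (ℓ * 21) → Fin 21 → Fin 21, IsRomanDesign (ℓ * 21) 21 2 D :=
  ⟨_, (isRomanDesign_groupDesign (Finite.equivFinOfCardEq FrobeniusGroup21.card)
    FrobeniusGroup21.roman2Seq_injective
    FrobeniusGroup21.roman2Seq_distanceQuotient_injective).stack ℓ⟩

theorem roman2_design_21 (ℓ : ℕ) (hℓ : 0 < ℓ) :
    ∃ D : Fin (ℓ * 21) → Fin 21 → Fin 21, IsRomanDesign (ℓ * 21) 21 2 D :=
  roman2_design_21_general ℓ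
end

section
/- For each pair (t, ℓ) in the set {(61,10), (71,14), (79,13), (101,20), (109,18), (113,16), (131,26), (151,25), (157,26), (181,36), (191,38), (211,42), (239,34), (251,50), (281,35)}, there exists an ℓt × t Vatican design. -/
open Finset

theorem card_filter_range_eq_le_of_periodic {α : Type*} [DecidableEq α] {f : ℕ → α}
    {k M q : ℕ} (hk : 0 < k) (hf : Function.Periodic f k)
    (hinj : Set.InjOn f {i | i < k ∧ i < M}) (w : α)
    (hw : ∀ i < k, i < M → f i = w → M ≤ i + k * q) :
    #{i ∈ range M | f i = w} ≤ q := by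
  have hmem : ∀ i ∈ {i ∈ range M | f i = w}, i < M ∧ f (i % k) = w := fun i hi => by
    rw [mem_filter, mem_range] at hi
    exact ⟨hi.1, hf.map_mod_nat i ▸ hi.2⟩
  -- the solutions lie in one residue class mod `k`, so their quotients by `k` are distinct
  have hres : ∀ i ∈ {i ∈ range M | f i = w}, ∀ j ∈ {i ∈ range M | f i = w}, i % k = j % k := by
    intro i hi j hj
    obtain ⟨hiM, hiw⟩ := hmem i hi
    obtain ⟨hjM, hjw⟩ := hmem j hj
    exact hinj ⟨Nat.mod_lt i hk, (Nat.mod_le i k).trans_lt hiM⟩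
      ⟨Nat.mod_lt j hk, (Nat.mod_le j k).trans_lt hjM⟩ (hiw.trans hjw.symm)
  calc #{i ∈ range M | f i = w} ≤ #(range q) := by
        refine card_le_card_of_injOn (· / k) (fun i hi => ?_) (fun i hi j hj hij => ?_)
        · obtain ⟨hiM, hiw⟩ := hmem i hi
          have hMq := hw _ (Nat.mod_lt i hk) ((Nat.mod_le i k).trans_lt hiM) hiw
          have hdiv := Nat.div_add_mod i k
          exact mem_range.mpr (Nat.lt_of_mul_lt_mul_left (a := k) (by linarith))
        · rw [← Nat.div_add_mod i k, ← Nat.div_add_mod j k, hres i hi j hj]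
          simp only at hij
          rw [hij]
    _ = q := card_range q

theorem card_filter_range_succ_eq_le_of_periodic {α : Type*} [DecidableEq α] {f : ℕ → α}
    {k ℓ M : ℕ} (hk : 0 < k) (hM : M < k * ℓ) (hf : Function.Periodic (fun i => f (i + 1)) k)
    (hinj : Set.InjOn (fun i => f (i + 1)) {i | i < k ∧ i < M})
    (h0 : ∀ i < k, i < M → f (i + 1) = f 0 → M ≤ i + k * (ℓ - 1)) (w : α) :
    #{j ∈ range (M + 1) | f j = w} ≤ ℓ := by
  rw [card_filter, sum_range_succ', ← card_filter]
  by_cases hw : f 0 = w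
  · have := card_filter_range_eq_le_of_periodic hk hf hinj w (hw ▸ h0)
    have : 0 < ℓ := Nat.pos_of_ne_zero (by rintro rfl; simp at hM)
    simp only [hw, if_true]
    omega
  · have := card_filter_range_eq_le_of_periodic hk hf hinj w (q := ℓ)
      fun i _ _ _ => by linarith
    simpa [hw] using this

section AffineDesign

variable {F : Type*} [Field F] {ℓ t : ℕ} (e : Fin t ≃ F) (u : Fin ℓ → F) (σ : ℕ → F)

def affineDesign (r : Fin (ℓ * t)) (j : Fin t) : Fin t :=
  e.symm (e (finProdFinEquiv.symm r).2 + u (finProdFinEquiv.symm r).1 * σ j)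

variable {e u σ}

theorem affineDesign_eq_iff {r : Fin (ℓ * t)} {j x : Fin t} :
    affineDesign e u σ r j = x ↔
      e (finProdFinEquiv.symm r).2 + u (finProdFinEquiv.symm r).1 * σ j = e x :=
  e.symm_apply_eq

theorem affineDesign_bijective (hσ : Set.InjOn σ (Set.Iio t)) (hu : ∀ m, u m ≠ 0)
    (r : Fin (ℓ * t)) : Function.Bijective (affineDesign e u σ r) := by
  refine Finite.injective_iff_bijective.mp fun j j' hjj' => Fin.ext (hσ j.isLt j'.isLt ?_)
  exact mul_left_cancel₀ (hu _) (add_left_cancel (e.symm.injective hjj'))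

theorem card_affineDesign_eq (j x : Fin t) :
    Nat.card {r // affineDesign e u σ r j = x} = ℓ := by
  let c : Fin ℓ → Fin t := fun m => e.symm (e x - u m * σ j)
  have hrow : ∀ r, affineDesign e u σ r j = x ↔
      (finProdFinEquiv.symm r).2 = c (finProdFinEquiv.symm r).1 := by
    intro r
    rw [affineDesign_eq_iff, Equiv.eq_symm_apply, eq_sub_iff_add_eq]
  calc Nat.card {r // affineDesign e u σ r j = x}
      = Nat.card {q : Fin ℓ × Fin t // q.2 = c q.1} :=
        Nat.card_congr (finProdFinEquiv.symm.subtypeEquiv hrow)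
    _ = Nat.card (Fin ℓ) := Nat.card_congr
        { toFun := fun q => q.1.1
          invFun := fun m => ⟨(m, c m), rfl⟩
          left_inv := fun q => Subtype.ext (Prod.ext rfl q.2.symm)
          right_inv := fun _ => rfl }
    _ = ℓ := Nat.card_eq_fintype_card.trans (Fintype.card_fin ℓ)

theorem isUniformDesign_affineDesign (hσ : Set.InjOn σ (Set.Iio t)) (hu : ∀ m, u m ≠ 0) :
    IsUniformDesign (ℓ * t) t (affineDesign e u σ) := by
  have ht : 0 < t := Fin.pos (e.symm 0)
  refine ⟨dvd_mul_left t ℓ, affineDesign_bijective hσ hu, fun j x => ?_⟩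
  rw [card_affineDesign_eq, Nat.mul_div_cancel ℓ ht]

theorem designPairCount_affineDesign_le [DecidableEq F] (hσ : Set.InjOn σ (Set.Iio t))
    (hu : Function.Injective u) (huℓ : ∀ m, u m ^ ℓ = 1) {d : ℕ} (hd : 0 < d) (x y : Fin t) :
    designPairCount (ℓ * t) t (affineDesign e u σ) d x y ≤
      #{j ∈ range (t - d) | (σ (j + d) - σ j) ^ ℓ = (e y - e x) ^ ℓ} := by
  have hpair : ∀ r (j : Fin t) (h : (j : ℕ) + d < t), affineDesign e u σ r j = x →
      affineDesign e u σ r ⟨j + d, h⟩ = y →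
        u (finProdFinEquiv.symm r).1 * (σ (j + d) - σ j) = e y - e x := by
    intro r j h hx hy
    rw [affineDesign_eq_iff] at hx hy
    rw [← hx, ← hy]
    ring
  have hgap : ∀ (j : Fin t) (h : (j : ℕ) + d < t), σ (j + d) - σ j ≠ 0 := fun j h hj =>
    hd.ne' (by simpa using hσ (Set.mem_Iio.mpr h) (Set.mem_Iio.mpr j.isLt) (sub_eq_zero.mp hj))
  rw [designPairCount, ← Nat.card_eq_finsetCard]
  refine Nat.card_le_card_of_injective
    (fun q => ⟨q.1.2, mem_filter.mpr ⟨mem_range.mpr ?_, ?_⟩⟩) ?_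
  · obtain ⟨h, -⟩ := q.2
    omega
  · obtain ⟨h, hx, hy⟩ := q.2
    rw [← hpair _ _ h hx hy, mul_pow, huℓ, one_mul]
  · rintro ⟨⟨r, j⟩, h, hx, hy⟩ ⟨⟨r', j'⟩, h', hx', hy'⟩ hjj'
    obtain rfl : j = j' := Fin.ext (congrArg Subtype.val hjj')
    have hm : (finProdFinEquiv.symm r).1 = (finProdFinEquiv.symm r').1 :=
      hu (mul_right_cancel₀ (hgap j h) ((hpair r j h hx hy).trans (hpair r' j h' hx' hy').symm))
    rw [affineDesign_eq_iff] at hx hx'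
    have hc : (finProdFinEquiv.symm r).2 = (finProdFinEquiv.symm r').2 := by
      rw [← hx', hm] at hx
      exact e.injective (add_right_cancel hx)
    simpa using finProdFinEquiv.symm.injective (Prod.ext hm hc)

end AffineDesign

def shiftedPowers {M₀ : Type*} [MonoidWithZero M₀] (g : M₀) : ℕ → M₀
  | 0 => 0
  | j + 1 => g ^ j

def gapPow {R : Type*} [Ring R] (g : R) (ℓ d j : ℕ) : R :=
  (shiftedPowers g (j + d) - shiftedPowers g j) ^ ℓ

theorem shiftedPowers_injOn {M₀ : Type*} [CommMonoidWithZero M₀] [NoZeroDivisors M₀]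
    [Nontrivial M₀] {g : M₀} {n : ℕ} (hg : IsPrimitiveRoot g n) (hn : n ≠ 0) :
    Set.InjOn (shiftedPowers g) (Set.Iio (n + 1)) := by
  have hpow : ∀ j, g ^ j ≠ 0 := fun j => pow_ne_zero j (hg.ne_zero hn)
  rintro (_ | i) hi (_ | j) hj hij
  · rfl
  · exact absurd hij.symm (hpow j)
  · exact absurd hij (hpow i)
  · simp only [Set.mem_Iio] at hi hj
    rw [hg.pow_inj (by omega) (by omega) hij]

theorem gapPow_periodic {R : Type*} [CommRing R] {g : R} {k ℓ : ℕ} (hg : g ^ (k * ℓ) = 1)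
    (d : ℕ) : Function.Periodic (fun i => gapPow g ℓ d (i + 1)) k := by
  intro i
  have hshift : ∀ j, shiftedPowers g (j + 1 + k) = g ^ k * shiftedPowers g (j + 1) := by
    intro j
    simp only [shiftedPowers, Nat.add_right_comm j 1 k, ← pow_add, add_comm k]
  show gapPow g ℓ d (i + k + 1) = gapPow g ℓ d (i + 1)
  rw [gapPow, gapPow, show i + k + 1 + d = i + d + 1 + k by omega,
    show i + k + 1 = i + 1 + k by omega, hshift, hshift, ← mul_sub, mul_pow, ← pow_mul, hg,
    one_mul, Nat.add_right_comm i d 1]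

theorem isVaticanDesign_affineDesign {F : Type*} [Field F] {t k ℓ : ℕ} (e : Fin t ≃ F) {g : F}
    (hg : IsPrimitiveRoot g (k * ℓ)) (ht : t = k * ℓ + 1)
    (hinj : ∀ d, 0 < d → d < t →
      Set.InjOn (fun i => gapPow g ℓ d (i + 1)) {i | i < k ∧ i < t - 1 - d})
    (h0 : ∀ d, 0 < d → d < t → ∀ i < k, i < t - 1 - d →
      gapPow g ℓ d (i + 1) = gapPow g ℓ d 0 → t - 1 - d ≤ i + k * (ℓ - 1)) :
    IsVaticanDesign (ℓ * t) t (affineDesign e (fun m => g ^ (k * m)) (shiftedPowers g)) := by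
  classical
  have hkℓ : k * ℓ ≠ 0 := by
    have := Finite.of_equiv _ e
    have hcard : 1 < Nat.card F := Finite.one_lt_card
    rw [← Nat.card_congr e, Nat.card_fin] at hcard
    omega
  have hk : 0 < k := Nat.pos_of_ne_zero (left_ne_zero_of_mul hkℓ)
  have hσ : Set.InjOn (shiftedPowers g) (Set.Iio t) := ht ▸ shiftedPowers_injOn hg hkℓ
  have hu : Function.Injective fun m : Fin ℓ => g ^ (k * m) := fun m m' hmm' =>
    Fin.ext (Nat.eq_of_mul_eq_mul_left hk (hg.pow_inj (Nat.mul_lt_mul_of_pos_left m.isLt hk)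
      (Nat.mul_lt_mul_of_pos_left m'.isLt hk) hmm'))
  have huℓ : ∀ m : Fin ℓ, (g ^ (k * m)) ^ ℓ = 1 := fun m => by
    rw [← pow_mul, mul_right_comm, pow_mul, hg.pow_eq_one, one_pow]
  refine ⟨isUniformDesign_affineDesign hσ fun m => pow_ne_zero _ (hg.ne_zero hkℓ),
    fun d hd hdt x y _ => ?_⟩
  rw [Nat.mul_div_cancel ℓ (by omega : 0 < t)]
  refine (designPairCount_affineDesign_le hσ hu huℓ hd x y).trans ?_
  rw [show t - d = t - 1 - d + 1 by omega]
  exact card_filter_range_succ_eq_le_of_periodic hk (by omega) (gapPow_periodic hg.pow_eq_one d)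
    (hinj d hd (by omega)) (h0 d hd (by omega)) _

/-- `shiftedPowers` in `ZMod p`, computed in `ℕ` so that the kernel can evaluate it. -/
def shiftedPowersMod (p g : ℕ) : ℕ → ℕ
  | 0 => 0
  | j + 1 => g ^ j % p

/-- `gapPow` likewise, with `p - ·` standing for negation mod `p`. -/
def gapPowMod (p g ℓ d j : ℕ) : ℕ :=
  (shiftedPowersMod p g (j + d) + (p - shiftedPowersMod p g j)) ^ ℓ % p

section Certificate

variable {p : ℕ}

theorem natCast_shiftedPowersMod (g j : ℕ) :
    (shiftedPowersMod p g j : ZMod p) = shiftedPowers (g : ZMod p) j := by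
  cases j <;> simp [shiftedPowersMod, shiftedPowers]

theorem shiftedPowersMod_le [NeZero p] (g j : ℕ) : shiftedPowersMod p g j ≤ p := by
  cases j
  · exact Nat.zero_le p
  · exact (Nat.mod_lt _ (NeZero.pos p)).le

theorem natCast_gapPowMod [NeZero p] (g ℓ d j : ℕ) :
    (gapPowMod p g ℓ d j : ZMod p) = gapPow (g : ZMod p) ℓ d j := by
  simp only [gapPowMod, gapPow, ZMod.natCast_mod, Nat.cast_pow, Nat.cast_add,
    Nat.cast_sub (shiftedPowersMod_le g j), ZMod.natCast_self, natCast_shiftedPowersMod, zero_sub,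
    ← sub_eq_add_neg]

theorem gapPowMod_eq_iff [NeZero p] {g ℓ d a b : ℕ} :
    gapPowMod p g ℓ d a = gapPowMod p g ℓ d b ↔
      gapPow (g : ZMod p) ℓ d a = gapPow (g : ZMod p) ℓ d b := by
  rw [← natCast_gapPowMod, ← natCast_gapPowMod, ZMod.natCast_eq_natCast_iff', gapPowMod,
    gapPowMod, Nat.mod_mod, Nat.mod_mod]

theorem natCast_pow_eq_one_iff (hp : 1 < p) {g e : ℕ} :
    (g : ZMod p) ^ e = 1 ↔ g ^ e % p = 1 := by
  rw [← Nat.cast_pow, ← Nat.cast_one, ZMod.natCast_eq_natCast_iff', Nat.one_mod_eq_one.mpr hp.ne']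

/-- The hypotheses of `isVaticanDesign_affineDesign` for `F = ZMod p` and `g` a primitive root
mod `p`, in a form that `decide` can evaluate. -/
def VaticanCertificate (p ℓ k g : ℕ) : Prop :=
  k * ℓ = p - 1 ∧ g ^ (p - 1) % p = 1 ∧ (∀ e < p - 1, 0 < e → g ^ e % p ≠ 1) ∧
  (∀ d < p, 0 < d → ∀ b < k, b < p - 1 - d → ∀ a < b,
    gapPowMod p g ℓ d (a + 1) ≠ gapPowMod p g ℓ d (b + 1)) ∧
  (∀ d < p, 0 < d → ∀ i < k, i < p - 1 - d →
    gapPowMod p g ℓ d (i + 1) = gapPowMod p g ℓ d 0 → p - 1 - d ≤ i + k * (ℓ - 1))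

set_option synthInstance.maxSize 1000 in
instance (p ℓ k g : ℕ) : Decidable (VaticanCertificate p ℓ k g) := by
  unfold VaticanCertificate
  infer_instance

theorem exists_isVaticanDesign_of_certificate {ℓ : ℕ} (k g : ℕ) (hp : p.Prime)
    (h : VaticanCertificate p ℓ k g) :
    ∃ D : Fin (ℓ * p) → Fin p → Fin p, IsVaticanDesign (ℓ * p) p D := by
  have := Fact.mk hp
  have := hp.two_le
  obtain ⟨hkℓ, hpow, hlt, hinj, h0⟩ := h
  have hroot : IsPrimitiveRoot (g : ZMod p) (k * ℓ) := by
    rw [hkℓ]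
    refine IsPrimitiveRoot.mk_of_lt _ (by omega) ((natCast_pow_eq_one_iff hp.one_lt).mpr hpow)
      fun e he hep => ?_
    rw [Ne, natCast_pow_eq_one_iff hp.one_lt]
    exact hlt e hep he
  refine ⟨_, isVaticanDesign_affineDesign (ZMod.finEquiv p).toEquiv hroot (by omega)
    (fun d hd hdp a ha b hb hab => ?_) (fun d hd hdp i hi hip hi0 => ?_)⟩
  · by_contra hne
    rcases Nat.lt_or_gt_of_ne hne with hlt | hlt
    · exact hinj d hdp hd b hb.1 hb.2 a hlt (gapPowMod_eq_iff.mpr hab)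
    · exact hinj d hdp hd a ha.1 ha.2 b hlt (gapPowMod_eq_iff.mpr hab.symm)
  · exact h0 d hdp hd i hi hip (gapPowMod_eq_iff.mpr hi0)

end Certificate

theorem vatican_design_primitive_root_list :
    ∀ p : ℕ × ℕ, p ∈ ({(61,10), (71,14), (79,13), (101,20), (109,18), (113,16),
        (131,26), (151,25), (157,26), (181,36), (191,38), (211,42), (239,34),
        (251,50), (281,35)} : Set (ℕ × ℕ)) →
      ∃ D : Fin (p.2 * p.1) → Fin p.1 → Fin p.1, IsVaticanDesign (p.2 * p.1) p.1 D := by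
  rintro p (rfl | rfl | rfl | rfl | rfl | rfl | rfl | rfl | rfl | rfl | rfl | rfl | rfl | rfl | rfl)
  · exact exists_isVaticanDesign_of_certificate 6 30 (by norm_num) (by decide +kernel)
  · exact exists_isVaticanDesign_of_certificate 5 55 (by norm_num) (by decide +kernel)
  · exact exists_isVaticanDesign_of_certificate 6 75 (by norm_num) (by decide +kernel)
  · exact exists_isVaticanDesign_of_certificate 5 48 (by norm_num) (by decide +kernel)
  · exact exists_isVaticanDesign_of_certificate 6 14 (by norm_num) (by decide +kernel)
  · exact exists_isVaticanDesign_of_certificate 7 92 (by norm_num) (by decide +kernel)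
  · exact exists_isVaticanDesign_of_certificate 5 37 (by norm_num) (by decide +kernel)
  · exact exists_isVaticanDesign_of_certificate 6 134 (by norm_num) (by decide +kernel)
  · exact exists_isVaticanDesign_of_certificate 6 21 (by norm_num) (by decide +kernel)
  · exact exists_isVaticanDesign_of_certificate 5 171 (by norm_num) (by decide +kernel)
  · exact exists_isVaticanDesign_of_certificate 5 58 (by norm_num) (by decide +kernel)
  · exact exists_isVaticanDesign_of_certificate 5 155 (by norm_num) (by decide +kernel)
  · exact exists_isVaticanDesign_of_certificate 7 156 (by norm_num) (by decide +kernel)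
  · exact exists_isVaticanDesign_of_certificate 5 29 (by norm_num) (by decide +kernel)
  · exact exists_isVaticanDesign_of_certificate 8 13 (by norm_num) (by decide +kernel)
end

section
/- The three orderings (0,1,2,3,5,7,4,10,9,8,6), (0,2,9,5,10,6,3,8,1,4,7), (0,5,8,1,7,6,4,2,10,3,9) of ZMod 11 form a Vatican triple for ZMod 11: for each 1 ≤ d ≤ 10 and each non-zero g ∈ ZMod 11, the number of pairs (r, j) with r ∈ {1,2,3}, 0 ≤ j < 11 − d and a_r(j+d) − a_r(j) = g is at most 3. -/
/-- A Roman-`k` `ℓ`-tuple for an additive group `G` of order `t`. -/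
def IsAddRomanTuple (G : Type*) [AddGroup G] (t k ℓ : ℕ)
    (a : Fin ℓ → Fin t → G) : Prop :=
  (∀ r : Fin ℓ, Function.Bijective (a r)) ∧
  ∀ d : ℕ, 1 ≤ d → d ≤ k → ∀ g : G, g ≠ 0 →
    Nat.card {p : Fin ℓ × Fin t //
      ∃ h : (p.2 : ℕ) + d < t, a p.1 ⟨(p.2 : ℕ) + d, h⟩ - a p.1 p.2 = g} ≤ ℓ

/-- A Vatican `ℓ`-tuple (for a group of order `t`) is a Roman-`(t-1)` `ℓ`-tuple. -/
def IsAddVaticanTuple (G : Type*) [AddGroup G] (t ℓ : ℕ)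
    (a : Fin ℓ → Fin t → G) : Prop :=
  IsAddRomanTuple G t (t - 1) ℓ a

open Finset

section DifferenceCount

variable {G : Type*} [AddGroup G] [DecidableEq G] {t ℓ : ℕ}

def differenceCount (a : Fin ℓ → Fin t → G) (d : ℕ) (g : G) : ℕ :=
  #{p : Fin ℓ × Fin t | ∃ h : (p.2 : ℕ) + d < t, a p.1 ⟨(p.2 : ℕ) + d, h⟩ - a p.1 p.2 = g}

theorem natCard_eq_differenceCount (a : Fin ℓ → Fin t → G) (d : ℕ) (g : G) :
    Nat.card {p : Fin ℓ × Fin t //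
      ∃ h : (p.2 : ℕ) + d < t, a p.1 ⟨(p.2 : ℕ) + d, h⟩ - a p.1 p.2 = g} =
      differenceCount a d g := by
  rw [Nat.card_eq_fintype_card, Fintype.card_subtype, differenceCount]

theorem isAddRomanTuple_iff_differenceCount_le {k : ℕ} (a : Fin ℓ → Fin t → G) :
    IsAddRomanTuple G t k ℓ a ↔ (∀ r, Function.Bijective (a r)) ∧
      ∀ d ∈ Icc 1 k, ∀ g ≠ 0, differenceCount a d g ≤ ℓ := by
  simp only [IsAddRomanTuple, natCard_eq_differenceCount, mem_Icc, and_imp]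

end DifferenceCount

theorem vatican_triple_zmod11 :
    IsAddVaticanTuple (ZMod 11) 11 3
      ![![0, 1, 2, 3, 5, 7, 4, 10, 9, 8, 6], ![0, 2, 9, 5, 10, 6, 3, 8, 1, 4, 7],
        ![0, 5, 8, 1, 7, 6, 4, 2, 10, 3, 9]] := by
  rw [IsAddVaticanTuple, isAddRomanTuple_iff_differenceCount_le]
  decide
end
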